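/- Let K be a field, M ⊆ ℤ^m an affine monoid, and let x, y ∈ M be noninvertible elements with x ≠ y. Let M' ⊆ ℤ^{m'} be an affine monoid and φ : M → M' a surjective additive monoid homomorphism with rank M' = rank M − 1 and φ(x) = φ(y). Then the ideal of K[M] generated by X^x − X^y is prime if and only if the kernel of the induced surjective K-algebra homomorphism K[M] → K[M'] (sending X^z to X^{φ(z)} for z ∈ M) equals the ideal generated by X^x − X^y; that is, if and only if this homomorphism induces a K-algebra isomorphism K[M]/(X^x − X^y) ≅ K[M']. -/

import Mathlib

/-!
The kernel of `K[M] → K[M']` is spanned by the binomials `X^a - X^b` with `φ a = φ b`, and it is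
prime because `K[M']` is a domain. So it suffices to show that each such binomial lies in
`P = (X^x - X^y)` once `P` is prime. As `φ` drops the rank by exactly one, its linear extension
to `gp(M)` has a kernel of rank one, so `a - b` has finite order `p` in `gp(M)/ℤ(x - y)`; up to
swapping `a` and `b`, `p(a - b) = q(x - y)` with `q ≥ 0`. Then `X^{qy}(X^{pa} - X^{pb})` is a
multiple of `X^{qx} - X^{qy} ∈ P`, and no monomial lies in `P`, so `X^{pa} - X^{pb} ∈ P`. Finally
`X^{pa} - X^{pb} = (∑_{i<p} X^{ia + (p-1-i)b}) (X^a - X^b)`, and the first factor is not in `P`: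
its `p` monomials have distinct degrees in `gp(M)/ℤ(x - y)`, so its image in
`K[gp(M)/ℤ(x - y)]`, a ring map killing `P`, is nonzero.
-/

open AddMonoidAlgebra

namespace AddSubmonoid

variable {G : Type*} [AddCommGroup G] {M : AddSubmonoid G}

theorem exists_sub_eq_of_mem_span {v : G} (hv : v ∈ Submodule.span ℤ (M : Set G)) :
    ∃ a b : M, (a : G) - b = v := by
  rw [← Submodule.mem_toAddSubgroup, Submodule.span_int_eq_addSubgroupClosure] at hv
  induction hv using AddSubgroup.closure_induction with
  | mem v hv => exact ⟨⟨v, hv⟩, 0, sub_zero v⟩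
  | zero => exact ⟨0, 0, sub_zero 0⟩
  | add u v _ _ hu hv =>
    obtain ⟨a, b, rfl⟩ := hu
    obtain ⟨c, d, rfl⟩ := hv
    exact ⟨a + c, b + d, by simp only [AddSubmonoid.coe_add]; abel⟩
  | neg v _ hv =>
    obtain ⟨a, b, rfl⟩ := hv
    exact ⟨b, a, (neg_sub (a : G) b).symm⟩

end AddSubmonoid

namespace AddMonoidHom

variable {G H : Type*} [AddCommGroup G] [AddCommGroup H] {M : AddSubmonoid G}
  {N : AddSubmonoid H} (φ : M →+ N)

theorem apply_sub_apply_eq_of_sub_eq {a b c d : M} (h : (a : G) - b = c - d) :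
    (φ a : H) - φ b = φ c - φ d := by
  have hadd : a + d = c + b := Subtype.ext (by simpa using sub_eq_sub_iff_add_eq_add.mp h)
  rw [sub_eq_sub_iff_add_eq_add, ← AddSubmonoid.coe_add, ← AddSubmonoid.coe_add, ← map_add,
    ← map_add, hadd]

theorem exists_linearMap_span :
    ∃ ψ : Submodule.span ℤ (M : Set G) →ₗ[ℤ] Submodule.span ℤ (N : Set H),
      ∀ (a b : M) (h : (a : G) - b ∈ Submodule.span ℤ (M : Set G)),
        (ψ ⟨(a : G) - b, h⟩ : H) = φ a - φ b := by
  choose a b hab using fun v : Submodule.span ℤ (M : Set G) =>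
    AddSubmonoid.exists_sub_eq_of_mem_span v.2
  have hφ : ∀ (v : Submodule.span ℤ (M : Set G)) (c d : M), (c : G) - d = v →
      (φ (a v) : H) - φ (b v) = φ c - φ d :=
    fun v c d h => φ.apply_sub_apply_eq_of_sub_eq ((hab v).trans h.symm)
  let ψ : Submodule.span ℤ (M : Set G) →+ Submodule.span ℤ (N : Set H) :=
    { toFun v := ⟨φ (a v) - φ (b v),
        sub_mem (Submodule.subset_span (φ _).2) (Submodule.subset_span (φ _).2)⟩
      map_zero' := Subtype.ext <| (hφ 0 0 0 (by simp)).trans (by simp)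
      map_add' u v := Subtype.ext <| by
        change (φ (a (u + v)) : H) - φ (b (u + v)) = (φ (a u) - φ (b u)) + (φ (a v) - φ (b v))
        rw [hφ (u + v) (a u + a v) (b u + b v)
          (by rw [Submodule.coe_add, ← hab u, ← hab v, AddSubmonoid.coe_add,
            AddSubmonoid.coe_add]; abel)]
        simp only [map_add, AddSubmonoid.coe_add]
        abel }
  exact ⟨ψ.toIntLinearMap, fun c d h => hφ _ c d rfl⟩

end AddMonoidHom

theorem exists_smul_eq_smul_of_finrank_eq_one {R V : Type*} [CommRing R] [IsDomain R]
    [AddCommGroup V] [Module R V] [Module.Finite R V] [Module.IsTorsionFree R V]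
    (h : Module.finrank R V = 1) (u : V) {v : V} (hv : v ≠ 0) :
    ∃ p q : R, p ≠ 0 ∧ p • u = q • v := by
  by_contra! hdep
  have hli : LinearIndependent R ![u, v] := by
    refine LinearIndependent.pair_iff.mpr fun s t hst => ?_
    by_cases hs : s = 0
    · subst hs
      simpa [hv] using hst
    · exact absurd (by rw [neg_smul, eq_neg_iff_add_eq_zero, hst]) (hdep s (-t) hs)
  simpa [h] using hli.fintype_card_le_finrank

theorem AddMonoidHom.exists_zsmul_sub_eq_zsmul_sub_of_finrank {G H : Type*} [AddCommGroup G]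
    [Module.Finite ℤ G] [IsAddTorsionFree G] [AddCommGroup H] {M : AddSubmonoid G}
    {N : AddSubmonoid H} (φ : M →+ N) (hφ : Function.Surjective φ)
    (hrank : Module.finrank ℤ (Submodule.span ℤ (N : Set H)) + 1 =
      Module.finrank ℤ (Submodule.span ℤ (M : Set G)))
    {x y a b : M} (hxy : x ≠ y) (hφxy : φ x = φ y) (hab : φ a = φ b) :
    ∃ p q : ℤ, p ≠ 0 ∧ p • ((a : G) - b) = q • ((x : G) - y) := by
  obtain ⟨ψ, hψ⟩ := φ.exists_linearMap_span
  have hsurj : Function.Surjective ψ := by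
    rintro ⟨w, hw⟩
    obtain ⟨c, d, rfl⟩ := AddSubmonoid.exists_sub_eq_of_mem_span hw
    obtain ⟨c, rfl⟩ := hφ c
    obtain ⟨d, rfl⟩ := hφ d
    exact ⟨_, Subtype.ext (hψ c d
      (sub_mem (Submodule.subset_span c.2) (Submodule.subset_span d.2)))⟩
  have hker : Module.finrank ℤ (LinearMap.ker ψ) = 1 := by
    have := (LinearMap.ker ψ).finrank_quotient_add_finrank
    rw [(ψ.quotKerEquivOfSurjective hsurj).finrank_eq] at this
    omega
  have hmem (c d : M) (hcd : φ c = φ d) :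
      ∃ w : LinearMap.ker ψ, ((w : Submodule.span ℤ (M : Set G)) : G) = c - d :=
    have h := sub_mem (Submodule.subset_span c.2) (Submodule.subset_span d.2)
    ⟨⟨⟨_, h⟩, Subtype.ext <| (hψ c d h).trans <| by simp [hcd]⟩, rfl⟩
  obtain ⟨u, hu⟩ := hmem a b hab
  obtain ⟨v, hv⟩ := hmem x y hφxy
  have hv0 : v ≠ 0 := fun h0 => hxy <| Subtype.ext <| sub_eq_zero.mp <| hv ▸ congr($h0.1.1)
  obtain ⟨p, q, hp, h⟩ := exists_smul_eq_smul_of_finrank_eq_one hker u hv0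
  exact ⟨p, q, hp, hu ▸ hv ▸ congr($h.1.1)⟩

section MonoidAlgebra

variable {K : Type*} [CommRing K] {M Q : Type*} [AddCommMonoid M] [AddCommMonoid Q]

theorem AddMonoidAlgebra.span_single_sub_single_le_ker (ψ : M →+ Q) {x y : M}
    (h : ψ x = ψ y) :
    Ideal.span {(single x 1 : K[M]) - single y 1} ≤ RingHom.ker (mapDomainRingHom K ψ) := by
  rw [Ideal.span_le, Set.singleton_subset_iff, SetLike.mem_coe, RingHom.mem_ker, map_sub,
    mapDomainRingHom_apply, mapDomainRingHom_apply, mapDomain_single, mapDomain_single, h,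
    sub_self]

theorem AddMonoidAlgebra.ker_mapDomainRingHom_le (ψ : M →+ Q) {I : Ideal K[M]}
    (hI : ∀ a b, ψ a = ψ b → (single a 1 : K[M]) - single b 1 ∈ I) :
    RingHom.ker (mapDomainRingHom K ψ) ≤ I := by
  -- `g` sends each point to a fixed representative of its `ψ`-fibre, so `mapDomain g` factors
  -- through `mapDomain ψ`, while `f - mapDomain g f` is a combination of binomials.
  set g : M → M := Function.invFun ψ ∘ ψ
  have hg (a : M) : ψ (g a) = ψ a := Function.invFun_eq ⟨a, rfl⟩
  have hsub (f : K[M]) : f - mapDomain g f ∈ I := by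
    induction f using AddMonoidAlgebra.induction_linear with
    | zero => simp
    | add f f' hf hf' =>
      rw [mapDomain_add, add_sub_add_comm]
      exact add_mem hf hf'
    | single a r =>
      rw [mapDomain_single, ← mul_one r, ← smul_single', ← smul_single', ← smul_sub]
      exact I.smul_of_tower_mem r (hI a (g a) (hg a).symm)
  intro f hf
  have hzero : mapDomain g f = 0 := by
    have : mapDomain g f = mapDomain (Function.invFun ψ) (mapDomain ψ f) := by
      ext; simp [g, Finsupp.mapDomain_comp]
    rw [this, ← mapDomainRingHom_apply, RingHom.mem_ker.mp hf, mapDomain_zero]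
  simpa [hzero] using hsub f

theorem AddMonoidAlgebra.geom_sum₂_single_ne_zero [Nontrivial K] {G : Type*} [AddCommGroup G]
    (u v : G) (hn : 0 < addOrderOf (u - v)) :
    ∑ i ∈ Finset.range (addOrderOf (u - v)),
      (single u 1 : K[G]) ^ i * single v 1 ^ (addOrderOf (u - v) - 1 - i) ≠ 0 := by
  set n := addOrderOf (u - v)
  have hterm (i : ℕ) : (single u 1 : K[G]) ^ i * single v 1 ^ (n - 1 - i) =
      single (i • u + (n - 1 - i) • v) 1 := by
    simp [single_pow, single_mul_single]
  have hdeg : ∀ i ∈ Finset.range n, i ≠ 0 →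
      i • u + (n - 1 - i) • v ≠ 0 • u + (n - 1 - 0) • v := by
    intro i hi hi0 h
    have hi := Finset.mem_range.mp hi
    have hsplit : (n - 1) • v = (n - 1 - i) • v + i • v := by
      rw [← add_nsmul, Nat.sub_add_cancel (by omega)]
    rw [zero_smul, zero_add, Nat.sub_zero, hsplit, add_comm, add_left_cancel_iff] at h
    have htors : i • (u - v) = 0 := by rw [nsmul_sub, h, sub_self]
    exact hi.not_ge (addOrderOf_le_of_nsmul_eq_zero (Nat.pos_of_ne_zero hi0) htors)
  intro h
  have hcoeff := congr(($h).coeff (0 • u + (n - 1 - 0) • v))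
  simp only [hterm, coeff_sum, Finsupp.finsetSum_apply, coeff_single, coeff_zero] at hcoeff
  rw [Finset.sum_eq_single_of_mem 0 (Finset.mem_range.mpr hn)
    fun i hi hi0 => Finsupp.single_eq_of_ne (hdeg i hi hi0).symm] at hcoeff
  simp at hcoeff

theorem AddMonoidAlgebra.single_sub_single_mem_span_of_nsmul_add_eq [Nontrivial K] {G : Type*}
    [AddCommGroup G] (ψ : M →+ G) {x y a b : M} (hψ : ψ x = ψ y)
    (hS : (Ideal.span {(single x 1 : K[M]) - single y 1}).IsPrime)
    (hp : 0 < addOrderOf (ψ a - ψ b)) {q : ℕ}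
    (h : addOrderOf (ψ a - ψ b) • a + q • y = q • x + addOrderOf (ψ a - ψ b) • b) :
    (single a 1 : K[M]) - single b 1 ∈ Ideal.span {(single x 1 : K[M]) - single y 1} := by
  set S := Ideal.span {(single x 1 : K[M]) - single y 1}
  set p := addOrderOf (ψ a - ψ b)
  have hker := span_single_sub_single_le_ker (K := K) ψ hψ
  have hmono (c : M) : single c 1 ∉ S := fun hc => by
    simpa using RingHom.mem_ker.mp (hker hc)
  have hxq : (single (q • x) 1 : K[M]) - single (q • y) 1 ∈ S := by
    rw [Ideal.mem_span_singleton]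
    simpa [single_pow] using sub_dvd_pow_sub_pow (single x 1 : K[M]) (single y 1) q
  have hpow : (single (p • a) 1 : K[M]) - single (p • b) 1 ∈ S := by
    have hshift : single (q • y) 1 * ((single (p • a) 1 : K[M]) - single (p • b) 1) =
        single (p • b) 1 * (single (q • x) 1 - single (q • y) 1) := by
      simp only [mul_sub, single_mul_single, one_mul]
      rw [add_comm (q • y), h, add_comm (p • b), add_comm (q • y)]
    exact (hS.mem_or_mem (hshift ▸ S.mul_mem_left _ hxq)).resolve_left (hmono _)
  rw [← one_pow p, ← single_pow, ← single_pow, ← geom_sum₂_mul] at hpow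
  refine (hS.mem_or_mem hpow).resolve_left fun hgeom => ?_
  have himage := RingHom.mem_ker.mp (hker hgeom)
  simp only [map_sum, map_mul, map_pow, mapDomainRingHom_apply, mapDomain_single] at himage
  exact geom_sum₂_single_ne_zero (ψ a) (ψ b) hp himage

end MonoidAlgebra

theorem AddSubmonoid.single_sub_single_mem_span_of_zsmul_sub_eq {K G : Type*} [CommRing K]
    [Nontrivial K] [AddCommGroup G] {M : AddSubmonoid G} {x y a b : M}
    (hS : (Ideal.span {(single x 1 : K[M]) - single y 1}).IsPrime) {p q : ℤ} (hp : p ≠ 0)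
    (h : p • ((a : G) - b) = q • ((x : G) - y)) :
    (single a 1 : K[M]) - single b 1 ∈ Ideal.span {(single x 1 : K[M]) - single y 1} := by
  set ψ : M →+ G ⧸ AddSubgroup.zmultiples ((x : G) - y) :=
    (QuotientAddGroup.mk' _).comp M.subtype
  have hψ : ψ x = ψ y := (QuotientAddGroup.eq_iff_sub_mem).mpr (AddSubgroup.mem_zmultiples _)
  have hψsub (c d : M) : ψ c - ψ d = ((c : G) - d : G) := rfl
  have hfin : 0 < addOrderOf (ψ a - ψ b) := by
    refine (isOfFinAddOrder_iff_zsmul_eq_zero.mpr ⟨p, hp, ?_⟩).addOrderOf_pos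
    rw [hψsub, ← QuotientAddGroup.mk_zsmul, h, QuotientAddGroup.eq_zero_iff]
    exact AddSubgroup.zsmul_mem _ (AddSubgroup.mem_zmultiples _) _
  set n := addOrderOf (ψ a - ψ b)
  have hmem : n • ((a : G) - b) ∈ AddSubgroup.zmultiples ((x : G) - y) := by
    rw [← QuotientAddGroup.eq_zero_iff, QuotientAddGroup.mk_nsmul, ← hψsub]
    exact addOrderOf_nsmul_eq_zero _
  obtain ⟨k, hk⟩ := AddSubgroup.mem_zmultiples_iff.mp hmem
  obtain ⟨q, rfl | rfl⟩ := Int.eq_nat_or_neg k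
  · refine single_sub_single_mem_span_of_nsmul_add_eq ψ hψ hS hfin (q := q) (Subtype.ext ?_)
    simp only [AddSubmonoid.coe_add, AddSubmonoidClass.coe_nsmul]
    rw [← sub_eq_sub_iff_add_eq_add, ← nsmul_sub, ← nsmul_sub, ← hk, natCast_zsmul]
  · have hba : addOrderOf (ψ b - ψ a) = n := by
      rw [← neg_sub (ψ a) (ψ b), addOrderOf_neg]
    rw [← neg_mem_iff, neg_sub]
    refine single_sub_single_mem_span_of_nsmul_add_eq ψ hψ hS (hba ▸ hfin) (q := q)
      (Subtype.ext ?_)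
    simp only [AddSubmonoid.coe_add, AddSubmonoidClass.coe_nsmul, hba]
    rw [← sub_eq_sub_iff_add_eq_add, ← nsmul_sub, ← nsmul_sub, ← neg_sub (a : G), smul_neg,
      ← hk, neg_smul, neg_neg, natCast_zsmul]

theorem binomial_prime_iff_ker_eq_general {m m' : ℕ} (K : Type*) [Field K]
    (M : AddSubmonoid (Fin m → ℤ))
    (M' : AddSubmonoid (Fin m' → ℤ))
    (x y : M) (hxy : x ≠ y)
    (φ : M →+ M') (hφsurj : Function.Surjective φ)
    (hrank : Module.finrank ℤ (Submodule.span ℤ (M' : Set (Fin m' → ℤ))) + 1 =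
      Module.finrank ℤ (Submodule.span ℤ (M : Set (Fin m → ℤ))))
    (hφxy : φ x = φ y) :
    (Ideal.span {(single x 1 : AddMonoidAlgebra K M) - single y 1}).IsPrime ↔
      RingHom.ker (mapDomainRingHom K φ) =
        Ideal.span {(single x 1 : AddMonoidAlgebra K M) - single y 1} := by
  refine ⟨fun hS => le_antisymm (ker_mapDomainRingHom_le φ fun a b hab => ?_)
    (span_single_sub_single_le_ker φ hφxy), fun hker => ?_⟩
  · obtain ⟨p, q, hp, h⟩ :=
      φ.exists_zsmul_sub_eq_zsmul_sub_of_finrank hφsurj hrank hxy hφxy hab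
    exact AddSubmonoid.single_sub_single_mem_span_of_zsmul_sub_eq hS hp h
  · have : UniqueSums M' :=
      .of_injective_addHom M'.subtype.toAddHom Subtype.coe_injective inferInstance
    exact hker ▸ RingHom.ker_isPrime _

/-- **Theorem.** Let `K` be a field, `M ⊆ ℤ^m` an affine monoid, `x ≠ y` noninvertible
elements of `M`, and `φ : M → M'` a surjective monoid homomorphism onto an affine monoid
`M' ⊆ ℤ^{m'}` with `rank M' = rank M − 1` and `φ(x) = φ(y)`.  Then `(X^x − X^y)` is a prime
ideal of `K[M]` if and only if the kernel of the induced `K`-algebra surjection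
`K[M] → K[M']` equals the ideal generated by `X^x − X^y`, i.e. iff
`K[M'] ≅ K[M]/(X^x − X^y)`. -/
theorem binomial_prime_iff_ker_eq {m m' : ℕ} (K : Type*) [Field K]
    (M : AddSubmonoid (Fin m → ℤ)) (hMfg : M.FG)
    (M' : AddSubmonoid (Fin m' → ℤ)) (hM'fg : M'.FG)
    (x y : M) (hx : -(x : Fin m → ℤ) ∉ M) (hy : -(y : Fin m → ℤ) ∉ M) (hxy : x ≠ y)
    (φ : M →+ M') (hφsurj : Function.Surjective φ)
    (hrank : Module.finrank ℤ (Submodule.span ℤ (M' : Set (Fin m' → ℤ))) + 1 =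
      Module.finrank ℤ (Submodule.span ℤ (M : Set (Fin m → ℤ))))
    (hφxy : φ x = φ y) :
    (Ideal.span {(single x 1 : AddMonoidAlgebra K M) - single y 1}).IsPrime ↔
      RingHom.ker (mapDomainRingHom K φ) =
        Ideal.span {(single x 1 : AddMonoidAlgebra K M) - single y 1} :=
  binomial_prime_iff_ker_eq_general K M M' x y hxy φ hφsurj hrank hφxy
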